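/- Let R and S be equivalence relations on ℕ. If the cardinality of the set of R-equivalence classes is at most the cardinality of the set of S-equivalence classes, then there is a function f : ℕ → ℕ computable relative to an oracle deciding both R and S (i.e., relative to the join {2·⟨x,y⟩ : x R y} ∪ {2·⟨x,y⟩+1 : x S y}) such that for all x, y: x R y ↔ f(x) S f(y). -/

import Mathlib

/-!
Number the classes of an equivalence relation in the order of their least elements: the index of
`x` is the number of least elements of classes that lie below the least element of the class of
`x`. Equivalent elements get equal indices and inequivalent ones distinct indices, and the indices
fill an initial segment of `ℕ` of length the number of classes. Since `R` has at most as many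
classes as `S`, every `R`-index is attained as an `S`-index, so `x` may be sent to the least `n`
whose `S`-index is the `R`-index of `x`. Least elements, indices and this search only need
decisions of `R` and `S`, i.e. queries to their join.
-/

/-- `RecursiveIn O f` means the partial function `f` is partial recursive in the
(total) oracle `O`. -/
inductive ORecursiveIn (O : ℕ → ℕ) : (ℕ →. ℕ) → Prop
  | zero : ORecursiveIn O (pure 0)
  | succ : ORecursiveIn O Nat.succ
  | left : ORecursiveIn O ↑fun n : ℕ => n.unpair.1
  | right : ORecursiveIn O ↑fun n : ℕ => n.unpair.2
  | oracle : ORecursiveIn O ↑O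
  | pair {f g} : ORecursiveIn O f → ORecursiveIn O g →
      ORecursiveIn O fun n => Nat.pair <$> f n <*> g n
  | comp {f g} : ORecursiveIn O f → ORecursiveIn O g →
      ORecursiveIn O fun n => g n >>= f
  | prec {f g} : ORecursiveIn O f → ORecursiveIn O g →
      ORecursiveIn O (Nat.unpaired fun a n =>
        n.rec (f a) fun y IH => do let i ← IH; g (Nat.pair a (Nat.pair y i)))
  | rfind {f} : ORecursiveIn O f →
      ORecursiveIn O fun a => Nat.rfind fun n => (fun m => m = 0) <$> f (Nat.pair a n)

/-- Turing reducibility between total functions on `ℕ`. -/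
def OTuringReducible (f g : ℕ → ℕ) : Prop := ORecursiveIn g ↑f

/-- Turing equivalence of total functions on `ℕ`. -/
def OTuringEquivalent (f g : ℕ → ℕ) : Prop := OTuringReducible f g ∧ OTuringReducible g f

theorem OTuringReducible.refl (f : ℕ → ℕ) : OTuringReducible f f := ORecursiveIn.oracle

theorem ORecursiveIn.trans' {f : ℕ →. ℕ} {g h : ℕ → ℕ}
    (hf : ORecursiveIn g f) (hg : OTuringReducible g h) : ORecursiveIn h f := by
  induction hf with
  | zero => exact .zero
  | succ => exact .succ
  | left => exact .left
  | right => exact .right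
  | oracle => exact hg
  | pair _ _ ih₁ ih₂ => exact .pair ih₁ ih₂
  | comp _ _ ih₁ ih₂ => exact .comp ih₁ ih₂
  | prec _ _ ih₁ ih₂ => exact .prec ih₁ ih₂
  | rfind _ ih => exact .rfind ih

theorem OTuringReducible.trans {f g h : ℕ → ℕ}
    (h₁ : OTuringReducible f g) (h₂ : OTuringReducible g h) : OTuringReducible f h :=
  ORecursiveIn.trans' h₁ h₂

/-- The setoid of Turing equivalence. -/
def turingSetoid : Setoid (ℕ → ℕ) :=
  ⟨OTuringEquivalent,
    fun f => ⟨.refl f, .refl f⟩,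
    fun ⟨h₁, h₂⟩ => ⟨h₂, h₁⟩,
    fun ⟨a₁, a₂⟩ ⟨b₁, b₂⟩ => ⟨a₁.trans b₁, b₂.trans a₂⟩⟩

/-- Turing degrees. -/
def OTuringDegree : Type := Quotient turingSetoid

/-- The Turing degree of a total function. -/
def OTuringDegree.deg (f : ℕ → ℕ) : OTuringDegree := Quotient.mk turingSetoid f

instance : LE OTuringDegree :=
  ⟨fun d₁ d₂ =>
    Quotient.liftOn₂ d₁ d₂ OTuringReducible
      (fun _ _ _ _ h h' =>
        propext ⟨fun hr => (h.2.trans hr).trans h'.1, fun hr => (h.1.trans hr).trans h'.2⟩)⟩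

instance : LT OTuringDegree := ⟨fun d₁ d₂ => d₁ ≤ d₂ ∧ ¬d₂ ≤ d₁⟩

/-- The least Turing degree. -/
def OTuringDegree.zero : OTuringDegree := OTuringDegree.deg fun _ => 0

/-- A partial function is computable in a Turing degree if it is recursive in some
(equivalently, any) representative of that degree. -/
def OTuringDegree.ComputableIn (d : OTuringDegree) (f : ℕ →. ℕ) : Prop :=
  Quotient.liftOn d (fun g => ORecursiveIn g f)
    (fun _ _ h => propext ⟨fun hr => hr.trans' h.1, fun hr => hr.trans' h.2⟩)

open Classical in
/-- The characteristic function of a set of naturals. -/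
noncomputable def charFun (A : Set ℕ) : ℕ → ℕ := fun n => if n ∈ A then 1 else 0

/-- Turing reducibility between sets of naturals. -/
noncomputable def SetTuringReducible (A B : Set ℕ) : Prop :=
  OTuringReducible (charFun A) (charFun B)

/-- The Turing degree of a set of naturals. -/
noncomputable def OTuringDegree.degSet (A : Set ℕ) : OTuringDegree :=
  OTuringDegree.deg (charFun A)

/-- `R` is `d`-computably reducible to `S`. -/
def ReducibleIn (d : OTuringDegree) (R S : ℕ → ℕ → Prop) : Prop :=
  ∃ f : ℕ → ℕ, d.ComputableIn ↑f ∧ ∀ x y, R x y ↔ S (f x) (f y)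

/-- The reducibility spectrum of the pair `(R, S)`. -/
def SpecRed (R S : ℕ → ℕ → Prop) : Set OTuringDegree := {d | ReducibleIn d R S}

/-- The bi-reducibility spectrum of the pair `(R, S)`. -/
def SpecBired (R S : ℕ → ℕ → Prop) : Set OTuringDegree :=
  {d | ReducibleIn d R S ∧ ReducibleIn d S R}

/-- The equivalence relation generated by a set `A`: two numbers are equivalent
iff they are equal or both belong to `A`. -/
def genRel (A : Set ℕ) : ℕ → ℕ → Prop := fun x y => x = y ∨ (x ∈ A ∧ y ∈ A)

/-- A ceer: an equivalence relation whose set of pairs is computably enumerable. -/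
def Ceer (R : ℕ → ℕ → Prop) : Prop :=
  Equivalence R ∧ REPred fun p : ℕ × ℕ => R p.1 p.2

/-- A computably enumerable set of naturals. -/
def CePred (A : Set ℕ) : Prop := REPred (· ∈ A)

/-- A partial transversal of `R`: a set any two distinct elements of which are
`R`-inequivalent. -/
def PartialTransversal (R : ℕ → ℕ → Prop) (A : Set ℕ) : Prop :=
  ∀ x ∈ A, ∀ y ∈ A, x ≠ y → ¬R x y

/-- An introreducible set: an infinite set computable from each of its infinite subsets. -/
def Introreducible (B : Set ℕ) : Prop :=
  B.Infinite ∧ ∀ C : Set ℕ, C ⊆ B → C.Infinite → SetTuringReducible B C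

def DecidableIn (O : ℕ → ℕ) (A : Set ℕ) : Prop := ORecursiveIn O ↑(charFun A)

namespace ORecursiveIn

variable {O : ℕ → ℕ} {A : Set ℕ}

theorem of_eq {f g : ℕ →. ℕ} (hf : ORecursiveIn O f) (H : ∀ n, f n = g n) :
    ORecursiveIn O g :=
  funext H ▸ hf

theorem of_partrec {f : ℕ →. ℕ} (hf : Nat.Partrec f) : ORecursiveIn O f := by
  induction hf with
  | zero => exact .zero
  | succ => exact .succ
  | left => exact .left
  | right => exact .right
  | pair _ _ ih₁ ih₂ => exact .pair ih₁ ih₂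
  | comp _ _ ih₁ ih₂ => exact .comp ih₁ ih₂
  | prec _ _ ih₁ ih₂ => exact .prec ih₁ ih₂
  | rfind _ ih => exact .rfind ih

theorem of_computable {f : ℕ → ℕ} (hf : Computable f) : ORecursiveIn O ↑f :=
  of_partrec (Partrec.nat_iff.1 hf.partrec)

theorem comp_total {f g : ℕ → ℕ} (hf : ORecursiveIn O ↑f) (hg : ORecursiveIn O ↑g) :
    ORecursiveIn O ↑fun n => f (g n) :=
  (hf.comp hg).of_eq fun _ => Part.bind_some _ _

theorem pair_total {f g : ℕ → ℕ} (hf : ORecursiveIn O ↑f) (hg : ORecursiveIn O ↑g) :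
    ORecursiveIn O ↑fun n => Nat.pair (f n) (g n) :=
  (hf.pair hg).of_eq fun n => by simp [PFun.coe_val, Seq.seq]

theorem comp₂_total {h : ℕ → ℕ → ℕ} {f g : ℕ → ℕ} (hh : Computable₂ h)
    (hf : ORecursiveIn O ↑f) (hg : ORecursiveIn O ↑g) :
    ORecursiveIn O ↑fun n => h (f n) (g n) := by
  have hh' : Computable fun p : ℕ => h p.unpair.1 p.unpair.2 :=
    hh.comp (Computable.fst.comp Computable.unpair) (Computable.snd.comp Computable.unpair)
  simpa using (of_computable hh').comp_total (hf.pair_total hg)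

theorem prec_total {f g : ℕ → ℕ} (hf : ORecursiveIn O ↑f) (hg : ORecursiveIn O ↑g) :
    ORecursiveIn O ↑fun p : ℕ => Nat.rec (motive := fun _ => ℕ) (f p.unpair.1)
      (fun y IH => g (Nat.pair p.unpair.1 (Nat.pair y IH))) p.unpair.2 := by
  refine (hf.prec hg).of_eq fun p => ?_
  simp only [Nat.unpaired, PFun.coe_val]
  induction p.unpair.2 with
  | zero => rfl
  | succ n ih => exact (congrArg (· >>= _) ih).trans (Part.bind_some _ _)

theorem sInf_pair_mem (hA : DecidableIn O A) (H : ∀ a, ∃ n, Nat.pair a n ∈ A) :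
    ORecursiveIn O ↑fun a => sInf {n | Nat.pair a n ∈ A} := by
  have ht : ORecursiveIn O ↑fun n => 1 - charFun A n :=
    comp₂_total Primrec.nat_sub.to_comp (of_computable (Computable.const 1)) hA
  have hzero : ∀ n, 1 - charFun A n = 0 ↔ n ∈ A := fun n => by
    by_cases h : n ∈ A <;> simp [charFun, h]
  refine ht.rfind.of_eq fun a => Part.eq_some_iff.2 (Nat.mem_rfind.2 ⟨?_, fun hm => ?_⟩)
  · simpa [PFun.coe_val, hzero] using Nat.sInf_mem (s := {n | Nat.pair a n ∈ A}) (H a)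
  · simpa [PFun.coe_val, hzero] using Nat.notMem_of_lt_sInf (s := {n | Nat.pair a n ∈ A}) hm

open Classical in
theorem count_mem (hA : DecidableIn O A) : ORecursiveIn O ↑(Nat.count (· ∈ A)) := by
  have hy : Computable fun q : ℕ => q.unpair.2.unpair.1 :=
    Computable.fst.comp (Computable.unpair.comp (Computable.snd.comp Computable.unpair))
  have hacc : Computable fun q : ℕ => q.unpair.2.unpair.2 :=
    Computable.snd.comp (Computable.unpair.comp (Computable.snd.comp Computable.unpair))
  have hstep := comp₂_total Primrec.nat_add.to_comp (of_computable hacc)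
    (hA.comp_total (of_computable hy))
  have hpair : Computable fun n => Nat.pair 0 n :=
    (Primrec₂.natPair.comp (Primrec.const 0) Primrec.id).to_comp
  refine ((prec_total (of_computable (Computable.const 0)) hstep).comp_total
    (of_computable hpair)).of_eq fun n => ?_
  simp only [Nat.unpair_pair, PFun.coe_val]
  congr 1
  induction n with
  | zero => rfl
  | succ n ih => rw [Nat.count_succ, ← ih]; rfl

end ORecursiveIn

namespace DecidableIn

variable {O : ℕ → ℕ} {A : Set ℕ}

theorem of_oracle (A : Set ℕ) : DecidableIn (charFun A) A := ORecursiveIn.oracle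

theorem preimage (hA : DecidableIn O A) {g : ℕ → ℕ} (hg : Computable g) :
    DecidableIn O (g ⁻¹' A) :=
  ORecursiveIn.comp_total (f := charFun A) hA (.of_computable hg)

theorem setOf_eq {f g : ℕ → ℕ} (hf : ORecursiveIn O ↑f) (hg : ORecursiveIn O ↑g) :
    DecidableIn O {n | f n = g n} := by
  have hh : Computable₂ fun a b : ℕ => if a = b then 1 else 0 :=
    (Primrec.ite Primrec.eq (Primrec.const 1) (Primrec.const 0)).to_comp
  refine (ORecursiveIn.comp₂_total hh hf hg).of_eq fun n => ?_
  by_cases h : f n = g n <;> simp [charFun, h]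

end DecidableIn

open Cardinal in
theorem Nat.cast_count_lt_mk {p : ℕ → Prop} [DecidablePred p] {n : ℕ} (hn : p n) :
    (Nat.count p n : Cardinal) < #{k | p k} := by
  have hsucc : Nat.count p n < Nat.count p (n + 1) := Nat.count_lt_count_succ_iff.2 hn
  have hle : (Nat.count p (n + 1) : Cardinal) ≤ #{k | p k} := by
    rw [Nat.count_eq_card_filter_range, ← Cardinal.mk_coe_finset]
    exact Cardinal.mk_le_mk_of_subset fun k hk => by simp_all
  exact (Nat.cast_lt.2 hsucc).trans_le hle

open Cardinal in
theorem Nat.exists_count_eq_of_lt_mk {p : ℕ → Prop} [DecidablePred p] {k : ℕ}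
    (hk : (k : Cardinal) < #{n | p n}) : ∃ n, p n ∧ Nat.count p n = k := by
  have hlt : ∀ hf : {n | p n}.Finite, k < hf.toFinset.card := fun hf => by
    rwa [← hf.coe_toFinset, Finset.coe_sort_coe, Cardinal.mk_coe_finset, Nat.cast_lt] at hk
  exact ⟨Nat.nth p k, Nat.nth_mem k hlt, Nat.count_nth hlt⟩

section ClassIndex

open Cardinal

variable {R S : ℕ → ℕ → Prop}

noncomputable def classRep (R : ℕ → ℕ → Prop) (x : ℕ) : ℕ := sInf {k | R k x}

def classReps (R : ℕ → ℕ → Prop) : Set ℕ := {m | classRep R m = m}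

open Classical in
noncomputable def classIndex (R : ℕ → ℕ → Prop) (x : ℕ) : ℕ :=
  Nat.count (· ∈ classReps R) (classRep R x)

theorem classRep_rel (hR : Equivalence R) (x : ℕ) : R (classRep R x) x :=
  Nat.sInf_mem (s := {k | R k x}) ⟨x, hR.refl x⟩

theorem classRep_eq_iff (hR : Equivalence R) {x y : ℕ} :
    classRep R x = classRep R y ↔ R x y := by
  refine ⟨fun h => hR.trans (hR.symm (classRep_rel hR x)) (h ▸ classRep_rel hR y),
    fun h => ?_⟩
  unfold classRep
  congr 1
  ext k
  exact ⟨fun hk => hR.trans hk h, fun hk => hR.trans hk (hR.symm h)⟩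

theorem classRep_mem_classReps (hR : Equivalence R) (x : ℕ) : classRep R x ∈ classReps R :=
  (classRep_eq_iff hR).2 (classRep_rel hR x)

theorem classIndex_eq_iff (hR : Equivalence R) {x y : ℕ} :
    classIndex R x = classIndex R y ↔ R x y := by
  classical
  rw [← classRep_eq_iff hR]
  exact ⟨Nat.count_injective (classRep_mem_classReps hR x) (classRep_mem_classReps hR y),
    congrArg _⟩

theorem mk_classReps (hR : Equivalence R) : #(classReps R) = #(Quot R) := by
  refine Cardinal.mk_congr (Equiv.ofBijective (fun m => Quot.mk R m) ⟨?_, ?_⟩)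
  · rintro ⟨m, hm⟩ ⟨m', hm'⟩ h
    have hmm' : R m m' := hR.eqvGen_iff.1 (Quot.eqvGen_exact h)
    exact Subtype.ext (hm.symm.trans (((classRep_eq_iff hR).2 hmm').trans hm'))
  · exact Quot.ind fun x => ⟨⟨classRep R x, classRep_mem_classReps hR x⟩,
      Quot.sound (classRep_rel hR x)⟩

theorem cast_classIndex_lt_mk (hR : Equivalence R) (x : ℕ) :
    (classIndex R x : Cardinal) < #(Quot R) := by
  classical
  exact mk_classReps hR ▸ Nat.cast_count_lt_mk (classRep_mem_classReps hR x)

theorem exists_classIndex_eq (hR : Equivalence R) {k : ℕ} (hk : (k : Cardinal) < #(Quot R)) :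
    ∃ n, classIndex R n = k := by
  classical
  obtain ⟨n, hn, hcount⟩ :=
    Nat.exists_count_eq_of_lt_mk (p := (· ∈ classReps R)) ((mk_classReps hR).symm ▸ hk)
  exact ⟨n, by rw [classIndex, hn]; convert hcount⟩

noncomputable def indexReduction (R S : ℕ → ℕ → Prop) (x : ℕ) : ℕ :=
  sInf {n | classIndex S n = classIndex R x}

theorem classIndex_indexReduction (hR : Equivalence R) (hS : Equivalence S)
    (hcard : #(Quot R) ≤ #(Quot S)) (x : ℕ) :
    classIndex S (indexReduction R S x) = classIndex R x :=
  Nat.sInf_mem (s := {n | classIndex S n = classIndex R x})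
    (exists_classIndex_eq hS ((cast_classIndex_lt_mk hR x).trans_le hcard))

theorem rel_iff_rel_indexReduction (hR : Equivalence R) (hS : Equivalence S)
    (hcard : #(Quot R) ≤ #(Quot S)) (x y : ℕ) :
    R x y ↔ S (indexReduction R S x) (indexReduction R S y) := by
  rw [← classIndex_eq_iff hR, ← classIndex_eq_iff hS, classIndex_indexReduction hR hS hcard,
    classIndex_indexReduction hR hS hcard]

end ClassIndex

section Computability

open Cardinal

variable {O : ℕ → ℕ} {R S : ℕ → ℕ → Prop}

theorem classRep_recursiveIn (hR : Equivalence R)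
    (hRO : DecidableIn O {p | R p.unpair.1 p.unpair.2}) : ORecursiveIn O ↑(classRep R) := by
  have hswap : Computable fun p : ℕ => Nat.pair p.unpair.2 p.unpair.1 :=
    Primrec.to_comp (Primrec₂.natPair.comp (Primrec.snd.comp Primrec.unpair)
      (Primrec.fst.comp Primrec.unpair))
  refine (ORecursiveIn.sInf_pair_mem (hRO.preimage hswap) fun x => ⟨x, ?_⟩).of_eq fun x => ?_
  · simpa using hR.refl x
  · simp [classRep]

theorem classIndex_recursiveIn (hR : Equivalence R)
    (hRO : DecidableIn O {p | R p.unpair.1 p.unpair.2}) : ORecursiveIn O ↑(classIndex R) := by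
  classical
  have hreps : DecidableIn O (classReps R) :=
    DecidableIn.setOf_eq (classRep_recursiveIn hR hRO) (.of_computable Computable.id)
  exact (ORecursiveIn.count_mem hreps).comp_total (classRep_recursiveIn hR hRO)

theorem indexReduction_recursiveIn (hR : Equivalence R) (hS : Equivalence S)
    (hcard : #(Quot R) ≤ #(Quot S))
    (hRO : DecidableIn O {p | R p.unpair.1 p.unpair.2})
    (hSO : DecidableIn O {p | S p.unpair.1 p.unpair.2}) :
    ORecursiveIn O ↑(indexReduction R S) := by
  have hA : DecidableIn O {p | classIndex S p.unpair.2 = classIndex R p.unpair.1} :=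
    DecidableIn.setOf_eq
      ((classIndex_recursiveIn hS hSO).comp_total
        (.of_computable (Computable.snd.comp Computable.unpair)))
      ((classIndex_recursiveIn hR hRO).comp_total
        (.of_computable (Computable.fst.comp Computable.unpair)))
  refine (ORecursiveIn.sInf_pair_mem hA fun x => ?_).of_eq fun x => ?_
  · simpa using exists_classIndex_eq hS ((cast_classIndex_lt_mk hR x).trans_le hcard)
  · simp [indexReduction]

end Computability

def relJoin (R S : ℕ → ℕ → Prop) : Set ℕ :=
  {n | (∃ x y, n = 2 * Nat.pair x y ∧ R x y) ∨ (∃ x y, n = 2 * Nat.pair x y + 1 ∧ S x y)}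

theorem decidableIn_left_relJoin (R S : ℕ → ℕ → Prop) :
    DecidableIn (charFun (relJoin R S)) {p | R p.unpair.1 p.unpair.2} := by
  have h : (2 * ·) ⁻¹' relJoin R S = {p | R p.unpair.1 p.unpair.2} := by
    ext p
    simp only [relJoin, Set.mem_preimage, Set.mem_ofPred_eq]
    constructor
    · rintro (⟨x, y, hp, hxy⟩ | ⟨x, y, hp, -⟩)
      · rwa [Nat.mul_left_cancel two_pos hp, Nat.unpair_pair]
      · omega
    · exact fun h => .inl ⟨_, _, by rw [Nat.pair_unpair], h⟩
  exact h ▸ (DecidableIn.of_oracle _).preimage (Primrec.nat_mul.comp (.const 2) .id).to_comp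

theorem decidableIn_right_relJoin (R S : ℕ → ℕ → Prop) :
    DecidableIn (charFun (relJoin R S)) {p | S p.unpair.1 p.unpair.2} := by
  have h : (2 * · + 1) ⁻¹' relJoin R S = {p | S p.unpair.1 p.unpair.2} := by
    ext p
    simp only [relJoin, Set.mem_preimage, Set.mem_ofPred_eq]
    constructor
    · rintro (⟨x, y, hp, -⟩ | ⟨x, y, hp, hxy⟩)
      · omega
      · rwa [show p = Nat.pair x y by omega, Nat.unpair_pair]
    · exact fun h => .inr ⟨_, _, by rw [Nat.pair_unpair], h⟩
  exact h ▸ (DecidableIn.of_oracle _).preimage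
    (Primrec.succ.comp (Primrec.nat_mul.comp (.const 2) .id)).to_comp

/-- If `R` has at most as many classes as `S`, then there is a
reduction from `R` to `S` computable in the join of `R` and `S`. -/
theorem stmt_1 (R S : ℕ → ℕ → Prop) (hR : Equivalence R) (hS : Equivalence S)
    (hcard : Cardinal.mk (Quot R) ≤ Cardinal.mk (Quot S)) :
    ∃ f : ℕ → ℕ,
      ORecursiveIn
        (charFun {n | (∃ x y, n = 2 * Nat.pair x y ∧ R x y) ∨
          (∃ x y, n = 2 * Nat.pair x y + 1 ∧ S x y)}) ↑f ∧
      ∀ x y, R x y ↔ S (f x) (f y) :=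
  ⟨indexReduction R S,
    indexReduction_recursiveIn hR hS hcard (decidableIn_left_relJoin R S)
      (decidableIn_right_relJoin R S),
    rel_iff_rel_indexReduction hR hS hcard⟩
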